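/- Let A → A₀ be a surjection of commutative rings with nilpotent kernel, and let B be a flat A-algebra such that B₀ = A₀ ⊗_A B is a finitely presented A₀-algebra. Then B is a finitely presented A-algebra. -/

import Mathlib

/-!
Write `A₀ = A ⧸ I` and `B₀ = A₀ ⊗[A] B`. Since `I` is nilpotent, Nakayama's lemma holds for
`I` without any finiteness assumption: `X ≤ N ⊔ I • X` forces `X ≤ N`.

Lifting generators of `B₀` to `B` gives a subalgebra `C` with `C + I • B = B`, hence `C = B`, so
`B` is of finite type and there is a surjection `φ : P = A[X₁, …, Xₙ] → B` with kernel `J`. By right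
exactness of `⊗`, the kernel of `A₀ ⊗ φ` is the image of `J` in `A₀ ⊗ P`; it is finitely generated
because `B₀` is finitely presented. Lifting its generators gives a finitely generated `J' ≤ J` with
`J ≤ J' + I • P`. Flatness of `B` gives `J ⊓ I • P = I • J`, so `J ≤ J' + I • J` and Nakayama
yields `J = J'`.
-/

open TensorProduct

theorem Submodule.le_of_le_sup_smul_of_pow_eq_bot {A M : Type*} [CommSemiring A]
    [AddCommMonoid M] [Module A M] {I : Ideal A} {k : ℕ} (hI : I ^ k = ⊥)
    {N X : Submodule A M} (h : X ≤ N ⊔ I • X) : X ≤ N := by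
  have key (n : ℕ) : X ≤ N ⊔ I ^ n • X := by
    induction n with
    | zero => simp
    | succ n ih =>
      calc X ≤ N ⊔ I ^ n • X := ih
        _ ≤ N ⊔ I ^ n • (N ⊔ I • X) := sup_le_sup_left (smul_mono_right _ h) _
        _ = N ⊔ (I ^ n • N ⊔ I ^ (n + 1) • X) := by
          rw [Submodule.smul_sup, ← Submodule.smul_assoc, smul_eq_mul, ← pow_succ]
        _ = N ⊔ I ^ (n + 1) • X := by
          rw [← sup_assoc, sup_of_le_left (Submodule.smul_le_right : I ^ n • N ≤ N)]
  simpa [hI] using key k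

theorem LinearMap.ker_le_of_le_sup_smul_top_of_flat {A M N : Type*} [CommRing A]
    [AddCommGroup M] [Module A M] [AddCommGroup N] [Module A N] [Module.Flat A N]
    {I : Ideal A} {k : ℕ} (hI : I ^ k = ⊥) (f : M →ₗ[A] N) (hf : Function.Surjective f)
    {J : Submodule A M} (hJ : J ≤ LinearMap.ker f) (h : LinearMap.ker f ≤ J ⊔ I • ⊤) :
    LinearMap.ker f ≤ J := by
  refine Submodule.le_of_le_sup_smul_of_pow_eq_bot hI (le_of_eq ?_)
  calc LinearMap.ker f = (J ⊔ I • ⊤) ⊓ LinearMap.ker f := (inf_eq_right.mpr h).symm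
    _ = J ⊔ LinearMap.ker f ⊓ I • ⊤ := by rw [sup_inf_assoc_of_le _ hJ, inf_comm]
    _ = J ⊔ I • LinearMap.ker f := by rw [f.ker_inf_smul_top_eq_smul_of_flat I hf]

theorem Algebra.TensorProduct.ker_includeRight_quotient {A : Type*} [CommRing A] (I : Ideal A)
    (B : Type*) [CommRing B] [Algebra A B] :
    (RingHom.ker (includeRight : B →ₐ[A] (A ⧸ I) ⊗[A] B)).restrictScalars A = I • ⊤ := by
  ext b
  have hb : quotTensorEquivQuotSMul B I ((1 : A ⧸ I) ⊗ₜ[A] b) = Submodule.Quotient.mk b := by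
    simp
  rw [Submodule.restrictScalars_mem, RingHom.mem_ker, ← Submodule.Quotient.mk_eq_zero, ← hb,
    LinearEquiv.map_eq_zero_iff]
  rfl

theorem Ideal.exists_fg_le_map_eq_of_surjective {R S F : Type*} [CommRing R] [CommRing S]
    [FunLike F R S] [RingHomClass F R S] {f : F} (hf : Function.Surjective f) {J : Ideal R}
    (hJ : (J.map f).FG) : ∃ J' ≤ J, J'.FG ∧ J'.map f = J.map f := by
  classical
  obtain ⟨s, hs⟩ := hJ
  have hsJ : (s : Set S) ⊆ f '' J := fun y hy ↦
    (Ideal.mem_map_iff_of_surjective f hf).mp (hs ▸ Ideal.subset_span hy)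
  obtain ⟨t, htJ, rfl⟩ := Finset.subset_set_image_iff.mp hsJ
  refine ⟨Ideal.span t, Ideal.span_le.mpr htJ, ⟨t, rfl⟩, ?_⟩
  rw [Ideal.map_span, ← hs, Finset.coe_image]

theorem Algebra.FiniteType.of_surjective_of_ker_le_smul_top {A S T : Type*} [CommRing A]
    [CommRing S] [Algebra A S] [CommRing T] [Algebra A T] [Algebra.FiniteType A T]
    {I : Ideal A} {k : ℕ} (hI : I ^ k = ⊥) (f : S →ₐ[A] T) (hf : Function.Surjective f)
    (hker : (RingHom.ker f).restrictScalars A ≤ I • ⊤) : Algebra.FiniteType A S := by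
  classical
  obtain ⟨s, hs⟩ := Algebra.FiniteType.out (R := A) (A := T)
  obtain ⟨t, -, rfl⟩ := (Finset.subset_set_image_iff (s := Set.univ) (t := s) (f := f)).mp
    (by rw [Set.image_univ_of_surjective hf]; exact Set.subset_univ _)
  refine ⟨t, top_le_iff.mp <| Submodule.le_of_le_sup_smul_of_pow_eq_bot hI
    (N := Subalgebra.toSubmodule (Algebra.adjoin A (t : Set S))) (X := ⊤) fun b _ ↦ ?_⟩
  obtain ⟨y, hy, hyb⟩ : f b ∈ (Algebra.adjoin A (t : Set S)).map f := by
    rw [← Algebra.adjoin_image, ← Finset.coe_image, hs]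
    trivial
  have hby : b - y ∈ I • (⊤ : Submodule A S) :=
    hker (by simpa [RingHom.mem_ker, sub_eq_zero] using hyb.symm)
  simpa using Submodule.add_mem_sup (show y ∈ Subalgebra.toSubmodule _ from hy) hby

theorem AlgHom.ker_fg_of_flat_of_finitePresentation_quotient_tensor {A P B : Type*} [CommRing A]
    [CommRing P] [Algebra A P] [Algebra.FinitePresentation A P]
    [CommRing B] [Algebra A B] [Module.Flat A B] {I : Ideal A} {k : ℕ} (hI : I ^ k = ⊥)
    [Algebra.FinitePresentation (A ⧸ I) ((A ⧸ I) ⊗[A] B)]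
    (φ : P →ₐ[A] B) (hφ : Function.Surjective φ) : (RingHom.ker φ).FG := by
  -- `map (AlgHom.id (A ⧸ I) _) φ` and `map (AlgHom.id A _) φ` are the same ring map, `A ⧸ I`-linear
  -- as needed here and `A`-linear as needed by `lTensor_ker`.
  have hK : (RingHom.ker (Algebra.TensorProduct.map (AlgHom.id A (A ⧸ I)) φ)).FG :=
    Algebra.FinitePresentation.ker_fG_of_surjective
      (Algebra.TensorProduct.map (AlgHom.id (A ⧸ I) (A ⧸ I)) φ)
      (Algebra.TensorProduct.map_surjective _ _ Function.surjective_id hφ)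
  rw [Algebra.TensorProduct.lTensor_ker _ hφ] at hK
  let π : P →ₐ[A] (A ⧸ I) ⊗[A] P := Algebra.TensorProduct.includeRight
  have hπ : Function.Surjective π :=
    Algebra.TensorProduct.includeRight_surjective P Ideal.Quotient.mk_surjective
  obtain ⟨J, hJ, hJfg, hmap⟩ := Ideal.exists_fg_le_map_eq_of_surjective hπ hK
  have hle : LinearMap.ker φ.toLinearMap ≤ J.restrictScalars A ⊔ I • ⊤ :=
    calc (RingHom.ker φ).restrictScalars A
        ≤ (J ⊔ RingHom.ker π).restrictScalars A := by
          gcongr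
          rw [← Ideal.comap_map_of_surjective' π hπ, hmap]
          exact Ideal.le_comap_map
      _ = J.restrictScalars A ⊔ I • ⊤ := by
          rw [Submodule.restrictScalars_sup, Algebra.TensorProduct.ker_includeRight_quotient]
  have hJφ : RingHom.ker φ = J :=
    le_antisymm ((Submodule.restrictScalars_le A).mp
      (φ.toLinearMap.ker_le_of_le_sup_smul_top_of_flat hI hφ hJ hle)) hJ
  exact hJφ ▸ hJfg

/-- Let `A → A₀ = A/I` be a surjection of commutative rings with
nilpotent kernel `I` (`I ^ k = 0`), and let `B` be a flat `A`-algebra such that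
`B₀ = A₀ ⊗_A B` is a finitely presented `A₀`-algebra. Then `B` is a finitely
presented `A`-algebra. -/
theorem finitePresentation_of_flat_and_finitePresentation_tensor_quotient
    (A : Type*) [CommRing A] (I : Ideal A) (k : ℕ) (hI : I ^ k = ⊥)
    (B : Type*) [CommRing B] [Algebra A B] [Module.Flat A B]
    (hB : Algebra.FinitePresentation (A ⧸ I) ((A ⧸ I) ⊗[A] B)) :
    Algebra.FinitePresentation A B := by
  have : Algebra.FiniteType A ((A ⧸ I) ⊗[A] B) := .trans (S := A ⧸ I) inferInstance inferInstance
  have hsurj := Algebra.TensorProduct.includeRight_surjective (R := A) B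
    (Ideal.Quotient.mk_surjective (I := I))
  have : Algebra.FiniteType A B := .of_surjective_of_ker_le_smul_top hI _ hsurj
    (Algebra.TensorProduct.ker_includeRight_quotient I B).le
  obtain ⟨n, φ, hφ⟩ := Algebra.FiniteType.iff_quotient_mvPolynomial''.mp this
  exact Algebra.FinitePresentation.of_surjective hφ
    (φ.ker_fg_of_flat_of_finitePresentation_quotient_tensor hI hφ)
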